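/- arXiv:1212.6672 — 4 statements merged into one kernel-verified Lean document; each statement's English description precedes it below -/
import Mathlib

section
/- Suppose the polynomial Bohnenblust–Hille inequality holds with constant D^m: for every m-homogeneous polynomial P(z) = ∑_{|α|=m} a_α z^α on ℂ^n, (∑_α |a_α|^{2m/(m+1)})^{(m+1)/(2m)} ≤ D^m · sup_{z∈𝔻^n} |P(z)|. Then for every r ∈ [1, 2m/(m+1)] there is a constant L > 0, independent of n and r, such that (∑_α |a_α|^r)^{1/r} ≤ L^m · n^{m/r - (m+1)/2} · sup_{z∈𝔻^n} |P(z)| for all such polynomials P. -/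
/-!
Hölder's inequality on the finite set of `N` multi-indices compares the `ℓ^r` and
`ℓ^{2m/(m+1)}` norms of the coefficients at the cost of a factor `N^{1/r - (m+1)/(2m)}`.
Since `N ≤ ((m+1) n)^m`, this factor is at most `(m+1)^m n^{m/r - (m+1)/2}`, and the
Bohnenblust–Hille inequality finishes the argument with `L = (m+1) D`.
-/

/-- The sup of an `m`-homogeneous polynomial with coefficients `a` on the closed
unit polydisc of `ℂ^n`. -/
noncomputable def supNorm (n m : ℕ) (a : (Fin n → ℕ) → ℂ) : ℝ :=
  ⨆ z : {z : Fin n → ℂ // ∀ i, ‖z i‖ ≤ 1},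
    ‖∑ α ∈ Finset.Nat.antidiagonalTuple n m, a α * ∏ i, (z : Fin n → ℂ) i ^ α i‖

open Finset

theorem Real.rpow_sum_rpow_le_card_rpow_mul {ι : Type*} (s : Finset ι) {f : ι → ℝ}
    (hf : ∀ i ∈ s, 0 ≤ f i) {r t : ℝ} (hr : 0 < r) (hrt : r ≤ t) :
    (∑ i ∈ s, f i ^ r) ^ (1 / r) ≤
      (#s : ℝ) ^ (1 / r - 1 / t) * (∑ i ∈ s, f i ^ t) ^ (1 / t) := by
  have ht : 0 < t := hr.trans_le hrt
  have hpow : ∑ i ∈ s, (f i ^ r) ^ (t / r) = ∑ i ∈ s, f i ^ t :=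
    sum_congr rfl fun i hi => by rw [← Real.rpow_mul (hf i hi), mul_div_cancel₀ t hr.ne']
  have key := Real.rpow_sum_le_const_mul_sum_rpow_of_nonneg s ((one_le_div hr).2 hrt)
    (fun i hi => Real.rpow_nonneg (hf i hi) r)
  rw [hpow] at key
  have hsum : 0 ≤ ∑ i ∈ s, f i ^ r := sum_nonneg fun i hi => Real.rpow_nonneg (hf i hi) r
  calc (∑ i ∈ s, f i ^ r) ^ (1 / r) = ((∑ i ∈ s, f i ^ r) ^ (t / r)) ^ (1 / t) := by
        rw [← Real.rpow_mul hsum]; congr 1; field_simp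
    _ ≤ ((#s : ℝ) ^ (t / r - 1) * ∑ i ∈ s, f i ^ t) ^ (1 / t) := by gcongr
    _ = (#s : ℝ) ^ (1 / r - 1 / t) * (∑ i ∈ s, f i ^ t) ^ (1 / t) := by
        rw [Real.mul_rpow (by positivity) (sum_nonneg fun i hi => Real.rpow_nonneg (hf i hi) t),
          ← Real.rpow_mul (by positivity)]
        congr 2
        field_simp

theorem Finset.Nat.card_antidiagonalTuple (k n : ℕ) :
    #(antidiagonalTuple k n) = (k + n - 1).choose n := by
  have := Sym.card_sym_eq_choose (α := Fin k) n
  rw [Fintype.card_fin] at this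
  rw [← this, ← Fintype.card_coe]
  exact Fintype.card_congr ((Equiv.subtypeEquivRight fun _ => mem_antidiagonalTuple).trans
    (Sym.equivNatSumOfFintype (Fin k) n).symm)

theorem Finset.Nat.card_antidiagonalTuple_le {k : ℕ} (hk : 0 < k) (n : ℕ) :
    #(antidiagonalTuple k n) ≤ ((n + 1) * k) ^ n := by
  rw [card_antidiagonalTuple]
  refine (Nat.choose_le_pow _ _).trans (Nat.pow_le_pow_left ?_ n)
  calc k + n - 1 ≤ n * 1 + k := by omega
    _ ≤ (n + 1) * k := by rw [add_mul, one_mul]; gcongr; omega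

theorem Finset.Nat.card_antidiagonalTuple_rpow_le {k : ℕ} (hk : 0 < k) (n : ℕ) {e : ℝ}
    (he₀ : 0 ≤ e) (he₁ : e ≤ 1) :
    (#(antidiagonalTuple k n) : ℝ) ^ e ≤ ((n : ℝ) + 1) ^ n * (k : ℝ) ^ (n * e) := by
  have hcard : (#(antidiagonalTuple k n) : ℝ) ≤ (((n : ℝ) + 1) * k) ^ (n : ℝ) := by
    rw [Real.rpow_natCast]; exact_mod_cast card_antidiagonalTuple_le hk n
  calc (#(antidiagonalTuple k n) : ℝ) ^ e ≤ ((((n : ℝ) + 1) * k) ^ (n : ℝ)) ^ e := by gcongr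
    _ = ((n : ℝ) + 1) ^ (n * e) * (k : ℝ) ^ (n * e) := by
        rw [← Real.rpow_mul (by positivity), Real.mul_rpow (by positivity) (by positivity)]
    _ ≤ ((n : ℝ) + 1) ^ n * (k : ℝ) ^ (n * e) := by
        rw [← Real.rpow_natCast]
        gcongr
        · linarith [n.cast_nonneg (α := ℝ)]
        · exact mul_le_of_le_one_right n.cast_nonneg he₁

theorem continuum_ineq_general (m : ℕ) (D : ℝ) (hD : 1 < D)
    (hBH : ∀ (n : ℕ), 0 < n → ∀ a : (Fin n → ℕ) → ℂ,
      (∑ α ∈ Finset.Nat.antidiagonalTuple n m,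
          ‖a α‖ ^ ((2 * m : ℝ) / (m + 1))) ^ (((m : ℝ) + 1) / (2 * m)) ≤
        D ^ m * supNorm n m a) :
    ∃ L : ℝ, 0 < L ∧ ∀ r : ℝ, 1 ≤ r → r ≤ 2 * m / (m + 1) →
      ∀ (n : ℕ), 0 < n → ∀ a : (Fin n → ℕ) → ℂ,
        (∑ α ∈ Finset.Nat.antidiagonalTuple n m, ‖a α‖ ^ r) ^ (1 / r) ≤
          L ^ m * (n : ℝ) ^ ((m : ℝ) / r - ((m : ℝ) + 1) / 2) * supNorm n m a := by
  refine ⟨(m + 1) * D, by positivity, fun r hr₁ hrt n hn a => ?_⟩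
  set t : ℝ := 2 * m / (m + 1) with ht
  have hr : 0 < r := one_pos.trans_le hr₁
  have hm : (m : ℝ) ≠ 0 := by rintro hm; simp [ht, hm] at hrt; linarith
  have he₀ : 0 ≤ 1 / r - 1 / t := sub_nonneg.2 (one_div_le_one_div_of_le hr hrt)
  have he₁ : 1 / r - 1 / t ≤ 1 := by
    have : 0 < 1 / t := by positivity
    linarith [(div_le_one hr).2 hr₁]
  have hexp : m * (1 / r - 1 / t) = m / r - (m + 1) / 2 := by rw [ht]; field_simp
  have hBH' :
      (∑ α ∈ Nat.antidiagonalTuple n m, ‖a α‖ ^ t) ^ (1 / t) ≤ D ^ m * supNorm n m a := by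
    rw [ht, one_div_div]; exact hBH n hn a
  calc (∑ α ∈ Nat.antidiagonalTuple n m, ‖a α‖ ^ r) ^ (1 / r)
      ≤ (#(Nat.antidiagonalTuple n m) : ℝ) ^ (1 / r - 1 / t) *
          (∑ α ∈ Nat.antidiagonalTuple n m, ‖a α‖ ^ t) ^ (1 / t) :=
        Real.rpow_sum_rpow_le_card_rpow_mul _ (fun _ _ => norm_nonneg _) hr hrt
    _ ≤ (((m : ℝ) + 1) ^ m * (n : ℝ) ^ (m * (1 / r - 1 / t))) * (D ^ m * supNorm n m a) := by
        gcongr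
        exact Finset.Nat.card_antidiagonalTuple_rpow_le hn m he₀ he₁
    _ = ((m + 1) * D) ^ m * (n : ℝ) ^ ((m : ℝ) / r - ((m : ℝ) + 1) / 2) * supNorm n m a := by
        rw [hexp, mul_pow]; ring

theorem continuum_ineq (m : ℕ) (hm : 0 < m) (D : ℝ) (hD : 1 < D)
    (hBH : ∀ (n : ℕ), 0 < n → ∀ a : (Fin n → ℕ) → ℂ,
      (∑ α ∈ Finset.Nat.antidiagonalTuple n m,
          ‖a α‖ ^ ((2 * m : ℝ) / (m + 1))) ^ (((m : ℝ) + 1) / (2 * m)) ≤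
        D ^ m * supNorm n m a) :
    ∃ L : ℝ, 0 < L ∧ ∀ r : ℝ, 1 ≤ r → r ≤ 2 * m / (m + 1) →
      ∀ (n : ℕ), 0 < n → ∀ a : (Fin n → ℕ) → ℂ,
        (∑ α ∈ Finset.Nat.antidiagonalTuple n m, ‖a α‖ ^ r) ^ (1 / r) ≤
          L ^ m * (n : ℝ) ^ ((m : ℝ) / r - ((m : ℝ) + 1) / 2) * supNorm n m a :=
  continuum_ineq_general m D hD hBH
end

section
/- Let P: ℝ^n → ℝ be an m-homogeneous polynomial, P(x) = ∑_{|α|=m} a_α x^α with real coefficients, and let P_ℂ: ℂ^n → ℂ be its complexification given by the same formula with complex arguments. Then sup_{z ∈ 𝔻^n} |P_ℂ(z)| ≤ 2^{m-1} · sup_{x ∈ [-1,1]^n} |P(x)|. -/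
/-!
Fix `z` in the polydisc and put `xₖ = Re (ωᵏ z)` for a primitive `2m`-th root of unity `ω`;
these points lie in the cube. Since `2 Re (ωᵏ zⱼ) = ω̄ᵏ (ω²ᵏ zⱼ + z̄ⱼ)` and `ω̄ᵏᵐ = (-1)ᵏ`,
homogeneity gives `2ᵐ P(xₖ) = (-1)ᵏ Q(ω²ᵏ)` for the one-variable polynomial
`Q(t) = P_ℂ(t z + z̄)` of degree `≤ m`. Averaging `Q` over the `m`-th roots of unity `ω²ᵏ` keeps
only its constant and leading coefficients `P_ℂ(z̄) + P_ℂ(z) = 2 Re P_ℂ(z)`, so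
`2m Re P_ℂ(z) = 2ᵐ ∑ₖ (-1)ᵏ P(xₖ) ≤ m 2ᵐ sup |P|`. Rotating `z` so that `P_ℂ(z) ≥ 0` finishes.
-/

open Finset Polynomial ComplexConjugate

theorem Polynomial.coeff_prod_sum_of_natDegree_le {R ι : Type*} [CommSemiring R] (s : Finset ι)
    (f : ι → R[X]) (d : ι → ℕ) (h : ∀ i ∈ s, (f i).natDegree ≤ d i) :
    (∏ i ∈ s, f i).coeff (∑ i ∈ s, d i) = ∏ i ∈ s, (f i).coeff (d i) := by
  induction s using Finset.cons_induction with
  | empty => simp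
  | cons i s _ ih =>
    have hs : ∀ j ∈ s, (f j).natDegree ≤ d j := fun j hj => h j (mem_cons_of_mem hj)
    rw [prod_cons, sum_cons, prod_cons, coeff_mul_add_eq_of_natDegree_le (h i (mem_cons_self i s))
      ((natDegree_prod_le _ _).trans (sum_le_sum hs)), ih hs]

theorem IsPrimitiveRoot.sum_eval_pow {R : Type*} [CommRing R] [IsDomain R] {ζ : R} {m : ℕ}
    (hζ : IsPrimitiveRoot ζ m) (hm : 0 < m) {p : R[X]} (hp : p.natDegree ≤ m) :
    ∑ k ∈ range m, p.eval (ζ ^ k) = m * (p.coeff 0 + p.coeff m) := by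
  have hgeom : ∀ i ∈ range (m + 1), i ≠ 0 → i ≠ m → ∑ k ∈ range m, (ζ ^ i) ^ k = 0 := by
    intro i hi h0 him
    have hne : ζ ^ i ≠ 1 :=
      hζ.pow_ne_one_of_pos_of_lt h0 ((Nat.lt_succ_iff.mp (mem_range.mp hi)).lt_of_ne him)
    refine eq_zero_of_ne_zero_of_mul_left_eq_zero (sub_ne_zero_of_ne hne.symm) ?_
    rw [mul_neg_geom_sum, ← pow_mul, mul_comm, pow_mul, hζ.pow_eq_one, one_pow, sub_self]
  calc ∑ k ∈ range m, p.eval (ζ ^ k)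
      = ∑ i ∈ range (m + 1), p.coeff i * ∑ k ∈ range m, (ζ ^ i) ^ k := by
        simp only [eval_eq_sum_range' (Nat.lt_succ_of_le hp), mul_sum, ← pow_mul]
        exact sum_comm.trans
          (sum_congr rfl fun i _ => sum_congr rfl fun k _ => by rw [mul_comm k i])
    _ = m * (p.coeff 0 + p.coeff m) := by
        rw [sum_eq_add 0 m hm.ne (fun i hi hi' => by rw [hgeom i hi hi'.1 hi'.2, mul_zero])
          (by simp) (by simp)]
        simp only [pow_zero, one_pow, sum_const, card_range, nsmul_eq_mul, mul_one, hζ.pow_eq_one]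
        ring

def homogeneousForm {R : Type*} [CommSemiring R] {n : ℕ} (m : ℕ) (c : (Fin n → ℕ) → R)
    (x : Fin n → R) : R :=
  ∑ α ∈ Nat.antidiagonalTuple n m, c α * ∏ i, x i ^ α i

section HomogeneousForm

variable {R S : Type*} [CommSemiring R] [CommSemiring S] {n : ℕ} (m : ℕ)
  (c : (Fin n → ℕ) → R)

theorem homogeneousForm_smul (t : R) (x : Fin n → R) :
    homogeneousForm m c (t • x) = t ^ m * homogeneousForm m c x := by
  rw [homogeneousForm, homogeneousForm, mul_sum]
  refine sum_congr rfl fun α hα => ?_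
  simp only [Pi.smul_apply, smul_eq_mul, mul_pow, prod_mul_distrib, prod_pow_eq_pow_sum,
    (Nat.mem_antidiagonalTuple.mp hα)]
  ring

theorem map_homogeneousForm (f : R →+* S) (x : Fin n → R) :
    f (homogeneousForm m c x) = homogeneousForm m (f ∘ c) (f ∘ x) := by
  simp [homogeneousForm, map_sum, map_prod]

theorem natDegree_homogeneousForm_le {p : Fin n → R[X]} (hp : ∀ i, (p i).natDegree ≤ 1) :
    (homogeneousForm m (C ∘ c) p).natDegree ≤ m := by
  refine natDegree_sum_le_of_forall_le _ _ fun α hα => natDegree_C_mul_le _ _ |>.trans ?_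
  refine (natDegree_prod_le _ _).trans ?_
  rw [← Nat.mem_antidiagonalTuple.mp hα]
  exact sum_le_sum fun i _ => (natDegree_pow_le_of_le _ (hp i)).trans_eq (mul_one _)

theorem coeff_homogeneousForm_self {p : Fin n → R[X]} (hp : ∀ i, (p i).natDegree ≤ 1) :
    (homogeneousForm m (C ∘ c) p).coeff m = homogeneousForm m c fun i => (p i).coeff 1 := by
  simp only [homogeneousForm, finsetSum_coeff, Function.comp_apply, coeff_C_mul]
  refine sum_congr rfl fun α hα => ?_
  have hpow : ∀ i, (p i ^ α i).natDegree ≤ α i := fun i =>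
    (natDegree_pow_le_of_le _ (hp i)).trans_eq (mul_one _)
  rw [← Nat.mem_antidiagonalTuple.mp hα, coeff_prod_sum_of_natDegree_le _ _ _ fun i _ => hpow i]
  congr 1
  refine prod_congr rfl fun i _ => ?_
  simpa using coeff_pow_of_natDegree_le (m := α i) (hp i)

theorem coeff_homogeneousForm_zero (p : Fin n → R[X]) :
    (homogeneousForm m (C ∘ c) p).coeff 0 = homogeneousForm m c fun i => (p i).coeff 0 := by
  simpa [Function.comp_def] using map_homogeneousForm m (C ∘ c) constantCoeff p

theorem eval_homogeneousForm (t : R) (p : Fin n → R[X]) :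
    (homogeneousForm m (C ∘ c) p).eval t = homogeneousForm m c fun i => (p i).eval t := by
  simpa [Function.comp_def] using map_homogeneousForm m (C ∘ c) (evalRingHom t) p

end HomogeneousForm

theorem norm_homogeneousForm_le_sum {R : Type*} [NormedCommRing R] [NormOneClass R] {n : ℕ}
    (m : ℕ) (c : (Fin n → ℕ) → R) {x : Fin n → R} (hx : ∀ i, ‖x i‖ ≤ 1) :
    ‖homogeneousForm m c x‖ ≤ ∑ α ∈ Nat.antidiagonalTuple n m, ‖c α‖ := by
  refine (norm_sum_le _ _).trans (sum_le_sum fun α _ => (norm_mul_le _ _).trans ?_)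
  refine mul_le_of_le_one_right (norm_nonneg _) ((Finset.norm_prod_le _ _).trans ?_)
  exact prod_le_one (fun i _ => norm_nonneg _) fun i _ =>
    (norm_pow_le _ _).trans (pow_le_one₀ (norm_nonneg _) (hx i))

theorem Complex.exists_norm_eq_one_pow_mul_eq_norm (w : ℂ) {m : ℕ} (hm : m ≠ 0) :
    ∃ u : ℂ, ‖u‖ = 1 ∧ u ^ m * w = ‖w‖ := by
  refine ⟨Complex.exp (↑(-w.arg / m) * Complex.I), Complex.norm_exp_ofReal_mul_I _, ?_⟩
  rw [← Complex.exp_nat_mul]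
  nth_rewrite 2 [← Complex.norm_mul_exp_arg_mul_I w]
  rw [mul_left_comm, ← Complex.exp_add]
  have : (m : ℂ) * (↑(-w.arg / m) * Complex.I) + w.arg * Complex.I = 0 := by
    push_cast
    field_simp
    ring
  rw [this, Complex.exp_zero, mul_one]

theorem Complex.two_mul_re_mul {u : ℂ} (hu : ‖u‖ = 1) (v : ℂ) :
    2 * ((u * v).re : ℂ) = conj u * (v * u ^ 2 + conj v) := by
  have huu : conj u * u = 1 := by rw [Complex.conj_mul', hu]; norm_num
  rw [← Complex.ofReal_ofNat, ← Complex.ofReal_mul, ← Complex.add_conj, map_mul]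
  linear_combination (-(u * v)) * huu

section Complex

variable {n m : ℕ}

theorem two_pow_mul_homogeneousForm_re_mul {ω : ℂ} (hω : IsPrimitiveRoot ω (2 * m)) (hm : 0 < m)
    (c : (Fin n → ℕ) → ℝ) (z : Fin n → ℂ) (k : ℕ) :
    2 ^ m * ((homogeneousForm m c fun j => (ω ^ k * z j).re : ℝ) : ℂ) =
      (-1) ^ k *
        homogeneousForm m (fun α => (c α : ℂ)) fun j => z j * (ω ^ 2) ^ k + conj (z j) := by
  have hnorm : ‖ω ^ k‖ = 1 := by rw [norm_pow, hω.norm'_eq_one (by omega), one_pow]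
  have hsign : conj (ω ^ k) ^ m = (-1) ^ k := by
    rw [← map_pow, ← pow_mul, mul_comm, pow_mul,
      (hω.pow (by omega) (mul_comm 2 m)).eq_neg_one_of_two_right]
    simp
  have hcast := map_homogeneousForm m c Complex.ofRealHom fun j => (ω ^ k * z j).re
  simp only [Complex.ofRealHom_eq_coe, Function.comp_def] at hcast
  have hdouble : ((2 : ℂ) • fun j => ((ω ^ k * z j).re : ℂ)) =
      conj (ω ^ k) • fun j => z j * (ω ^ 2) ^ k + conj (z j) := by
    ext j
    simp only [Pi.smul_apply, smul_eq_mul, Complex.two_mul_re_mul hnorm, ← pow_mul, mul_comm 2 k]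
  rw [hcast, ← homogeneousForm_smul, hdouble, homogeneousForm_smul, hsign]

theorem sum_neg_one_pow_mul_homogeneousForm_re {ω : ℂ} (hω : IsPrimitiveRoot ω (2 * m))
    (hm : 0 < m) (c : (Fin n → ℕ) → ℝ) (z : Fin n → ℂ) :
    ∑ k ∈ range m, (-1) ^ k * 2 ^ m * homogeneousForm m c (fun j => (ω ^ k * z j).re) =
      2 * m * (homogeneousForm m (fun α => (c α : ℂ)) z).re := by
  set Q : ℂ[X] :=
    homogeneousForm m (C ∘ fun α => (c α : ℂ)) fun j => C (z j) * X + C (conj (z j))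
  have hQ : ∀ j, (C (z j) * X + C (conj (z j))).natDegree ≤ 1 := fun j => natDegree_linear_le
  have hconj : homogeneousForm m (fun α => (c α : ℂ)) (fun j => conj (z j)) =
      conj (homogeneousForm m (fun α => (c α : ℂ)) z) := by
    simp [map_homogeneousForm, Function.comp_def]
  apply Complex.ofReal_injective
  calc _ = ∑ k ∈ range m, Q.eval ((ω ^ 2) ^ k) := by
        push_cast
        refine sum_congr rfl fun k _ => ?_
        rw [mul_assoc, two_pow_mul_homogeneousForm_re_mul hω hm, ← mul_assoc, ← mul_pow,
          eval_homogeneousForm]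
        simp
    _ = m * (Q.coeff 0 + Q.coeff m) :=
        (hω.pow (by omega) rfl).sum_eval_pow hm (natDegree_homogeneousForm_le m _ hQ)
    _ = _ := by
        rw [coeff_homogeneousForm_zero, coeff_homogeneousForm_self m _ hQ]
        simp only [coeff_add, coeff_C_mul, coeff_X_zero, coeff_X_one, coeff_C_zero, coeff_C_succ]
        simp only [mul_zero, zero_add, mul_one, add_zero, hconj]
        push_cast
        rw [Complex.re_eq_add_conj]
        ring

theorem re_homogeneousForm_le (hm : 0 < m) (c : (Fin n → ℕ) → ℝ) {z : Fin n → ℂ}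
    (hz : ∀ i, ‖z i‖ ≤ 1) {S : ℝ}
    (hS : ∀ x : Fin n → ℝ, (∀ i, |x i| ≤ 1) → |homogeneousForm m c x| ≤ S) :
    (homogeneousForm m (fun α => (c α : ℂ)) z).re ≤ 2 ^ (m - 1) * S := by
  obtain ⟨ω, hω⟩ : ∃ ω : ℂ, IsPrimitiveRoot ω (2 * m) :=
    ⟨_, Complex.isPrimitiveRoot_exp (2 * m) (by omega)⟩
  have hterm : ∀ k ∈ range m,
      (-1) ^ k * 2 ^ m * homogeneousForm m c (fun j => (ω ^ k * z j).re) ≤ 2 ^ m * S := by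
    intro k _
    have hx : ∀ j, |(ω ^ k * z j).re| ≤ 1 := fun j => (Complex.abs_re_le_norm _).trans <| by
      rw [norm_mul, norm_pow, hω.norm'_eq_one (by omega), one_pow, one_mul]
      exact hz j
    have hsign : (-1 : ℝ) ^ k * homogeneousForm m c (fun j => (ω ^ k * z j).re) ≤ S := by
      refine (le_abs_self _).trans ?_
      rw [abs_mul, abs_pow, abs_neg, abs_one, one_pow, one_mul]
      exact hS _ hx
    rw [mul_comm ((-1 : ℝ) ^ k), mul_assoc]
    exact mul_le_mul_of_nonneg_left hsign (by positivity)
  have h2m : (2 : ℝ) ^ m = 2 * 2 ^ (m - 1) := by rw [← pow_succ']; congr 1; omega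
  have := (sum_neg_one_pow_mul_homogeneousForm_re hω hm c z).symm.le.trans (sum_le_sum hterm)
  rw [sum_const, card_range, nsmul_eq_mul, h2m] at this
  exact le_of_mul_le_mul_left (this.trans_eq (by ring)) (mul_pos two_pos (Nat.cast_pos.mpr hm))

theorem norm_homogeneousForm_le (hm : 0 < m) (c : (Fin n → ℕ) → ℝ) {z : Fin n → ℂ}
    (hz : ∀ i, ‖z i‖ ≤ 1) {S : ℝ}
    (hS : ∀ x : Fin n → ℝ, (∀ i, |x i| ≤ 1) → |homogeneousForm m c x| ≤ S) :
    ‖homogeneousForm m (fun α => (c α : ℂ)) z‖ ≤ 2 ^ (m - 1) * S := by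
  obtain ⟨u, hu, hrot⟩ :=
    (homogeneousForm m (fun α => (c α : ℂ)) z).exists_norm_eq_one_pow_mul_eq_norm hm.ne'
  have huz : ∀ i, ‖(u • z) i‖ ≤ 1 := fun i => by simpa [hu] using hz i
  calc ‖homogeneousForm m (fun α => (c α : ℂ)) z‖
      = (homogeneousForm m (fun α => (c α : ℂ)) (u • z)).re := by
        rw [homogeneousForm_smul, hrot, Complex.ofReal_re]
    _ ≤ 2 ^ (m - 1) * S := re_homogeneousForm_le hm c huz hS

end Complex

theorem visser_general (m n : ℕ) (hm : 0 < m) (a : (Fin n → ℕ) → ℝ) :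
    (⨆ z : {z : Fin n → ℂ // ∀ i, ‖z i‖ ≤ 1},
        ‖∑ α ∈ Finset.Nat.antidiagonalTuple n m,
            (a α : ℂ) * ∏ i, (z : Fin n → ℂ) i ^ α i‖) ≤
      2 ^ (m - 1) *
        ⨆ x : {x : Fin n → ℝ // ∀ i, |x i| ≤ 1},
          |∑ α ∈ Finset.Nat.antidiagonalTuple n m,
              a α * ∏ i, (x : Fin n → ℝ) i ^ α i| := by
  change (⨆ z : {z : Fin n → ℂ // ∀ i, ‖z i‖ ≤ 1},
      ‖homogeneousForm m (fun α => (a α : ℂ)) z.1‖) ≤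
    2 ^ (m - 1) * ⨆ x : {x : Fin n → ℝ // ∀ i, |x i| ≤ 1}, |homogeneousForm m a x.1|
  have : Nonempty {z : Fin n → ℂ // ∀ i, ‖z i‖ ≤ 1} := ⟨⟨0, by simp⟩⟩
  have hbdd : BddAbove (Set.range fun x : {x : Fin n → ℝ // ∀ i, |x i| ≤ 1} =>
      |homogeneousForm m a x.1|) :=
    ⟨_, Set.forall_mem_range.mpr fun x => norm_homogeneousForm_le_sum m a x.2⟩
  exact ciSup_le fun z => norm_homogeneousForm_le hm a z.2 fun x hx => le_ciSup hbdd ⟨x, hx⟩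

theorem visser (m n : ℕ) (hm : 0 < m) (hn : 0 < n) (a : (Fin n → ℕ) → ℝ) :
    (⨆ z : {z : Fin n → ℂ // ∀ i, ‖z i‖ ≤ 1},
        ‖∑ α ∈ Finset.Nat.antidiagonalTuple n m,
            (a α : ℂ) * ∏ i, (z : Fin n → ℂ) i ^ α i‖) ≤
      2 ^ (m - 1) *
        ⨆ x : {x : Fin n → ℝ // ∀ i, |x i| ≤ 1},
          |∑ α ∈ Finset.Nat.antidiagonalTuple n m,
              a α * ∏ i, (x : Fin n → ℝ) i ^ α i| :=
  visser_general m n hm a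
end

section
/- Let m ≥ 1 and suppose there exist constants D > 1 (Bohnenblust–Hille) and C_KSZ > 0 (Kahane–Salem–Zygmund, providing for each n > m an m-homogeneous ±1-coefficient polynomial P_n on ℂ^n with ‖P_n‖_∞ ≤ C_KSZ · n^{(m+1)/2}√(log m)). Then for each r ∈ [1, 2m/(m+1)], the infimum of all exponents t such that some constant C satisfies ‖P‖_r ≤ C · n^t · ‖P‖_∞ for all n and all m-homogeneous polynomials P on ℂ^n equals exactly m/r - (m+1)/2. -/
open Finset Filter

theorem Nat.multichoose_le_pow (n k : ℕ) : n.multichoose k ≤ n ^ k := by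
  induction n generalizing k with
  | zero => cases k <;> simp [Nat.multichoose_zero_succ]
  | succ n ihn =>
    induction k with
    | zero => simp
    | succ k ihk =>
      rw [Nat.multichoose_succ_succ, pow_succ (n + 1)]
      calc n.multichoose (k + 1) + (n + 1).multichoose k ≤ n ^ (k + 1) + (n + 1) ^ k :=
            add_le_add (ihn _) ihk
        _ ≤ n * (n + 1) ^ k + (n + 1) ^ k := by
            rw [pow_succ']; gcongr; omega
        _ = (n + 1) ^ k * (n + 1) := by ring

theorem Nat.pow_div_factorial_le_multichoose {𝕜 : Type*} [Semifield 𝕜] [LinearOrder 𝕜]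
    [IsStrictOrderedRing 𝕜] (n : ℕ) {k : ℕ} (hk : 0 < k) :
    (n ^ k : 𝕜) / k.factorial ≤ n.multichoose k := by
  have := Nat.pow_le_choose (α := 𝕜) k (n + k - 1)
  rwa [show n + k - 1 + 1 - k = n by omega, ← Nat.multichoose_eq] at this

theorem Finset.Nat.card_antidiagonalTuple_s10 (n m : ℕ) :
    #(antidiagonalTuple n m) = n.multichoose m := by
  have h : antidiagonalTuple n m = piAntidiag univ m := by
    ext; simp [Finset.Nat.mem_antidiagonalTuple]
  have := card_finsuppAntidiag_nat_eq_multichoose (s := (univ : Finset (Fin n))) m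
  rw [card_univ, Fintype.card_fin] at this
  rw [← this, h]
  simp only [finsuppAntidiag, card_map, card_attach]

theorem Real.Lp_le_card_rpow_mul_Lq_of_nonneg {ι : Type*} (s : Finset ι) {f : ι → ℝ}
    (hf : ∀ i ∈ s, 0 ≤ f i) {p q : ℝ} (hp : 0 < p) (hpq : p ≤ q) :
    (∑ i ∈ s, f i ^ p) ^ (1 / p) ≤ (#s : ℝ) ^ (1 / p - 1 / q) * (∑ i ∈ s, f i ^ q) ^ (1 / q) := by
  have hq : 0 < q := hp.trans_le hpq
  have hfp : ∀ i ∈ s, 0 ≤ f i ^ p := fun i hi => Real.rpow_nonneg (hf i hi) p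
  have key := Real.rpow_sum_le_const_mul_sum_rpow_of_nonneg (s := s) ((one_le_div hp).2 hpq) hfp
  have hpow : ∀ i ∈ s, (f i ^ p) ^ (q / p) = f i ^ q := fun i hi => by
    rw [← Real.rpow_mul (hf i hi), mul_div_cancel₀ q hp.ne']
  rw [sum_congr rfl hpow] at key
  have hS : 0 ≤ ∑ i ∈ s, f i ^ p := sum_nonneg hfp
  calc (∑ i ∈ s, f i ^ p) ^ (1 / p) = ((∑ i ∈ s, f i ^ p) ^ (q / p)) ^ (1 / q) := by
        rw [← Real.rpow_mul hS]; congr 1; field_simp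
    _ ≤ ((#s : ℝ) ^ (q / p - 1) * ∑ i ∈ s, f i ^ q) ^ (1 / q) := by gcongr
    _ = (#s : ℝ) ^ (1 / p - 1 / q) * (∑ i ∈ s, f i ^ q) ^ (1 / q) := by
        rw [Real.mul_rpow (by positivity) (sum_nonneg fun i hi => Real.rpow_nonneg (hf i hi) q),
          ← Real.rpow_mul (by positivity)]
        congr 2; field_simp

theorem le_of_eventually_mul_rpow_le {c K s t : ℝ} (hc : 0 < c)
    (h : ∀ᶠ n : ℕ in atTop, c * (n : ℝ) ^ s ≤ K * (n : ℝ) ^ t) : s ≤ t := by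
  by_contra! hts
  have hgrowth : Tendsto (fun n : ℕ => c * (n : ℝ) ^ (s - t)) atTop atTop :=
    ((tendsto_rpow_atTop (sub_pos.2 hts)).comp tendsto_natCast_atTop_atTop).const_mul_atTop hc
  obtain ⟨n, hn, hKn, hn0⟩ :=
    (h.and ((hgrowth.eventually_gt_atTop K).and (eventually_gt_atTop 0))).exists
  have hnpos : (0 : ℝ) < n := by exact_mod_cast hn0
  have : c * (n : ℝ) ^ (s - t) * (n : ℝ) ^ t = c * (n : ℝ) ^ s := by
    rw [mul_assoc, ← Real.rpow_add hnpos, sub_add_cancel]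
  nlinarith [Real.rpow_pos_of_pos hnpos t]

theorem sum_norm_rpow_eq_card_of_sign {ι E : Type*} [NormedRing E] [NormOneClass E]
    (s : Finset ι) {ε : ι → E}
    (hε : ∀ i ∈ s, ε i = 1 ∨ ε i = -1) (r : ℝ) : ∑ i ∈ s, ‖ε i‖ ^ r = #s := by
  rw [card_eq_sum_ones, Nat.cast_sum]
  refine sum_congr rfl fun i hi => ?_
  rcases hε i hi with h | h <;> simp [h]

def HasCoeffBoundExponent (m : ℕ) (r t : ℝ) : Prop :=
  ∃ C : ℝ, 0 < C ∧ ∀ (n : ℕ), 0 < n → ∀ a : (Fin n → ℕ) → ℂ,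
    (∑ α ∈ Finset.Nat.antidiagonalTuple n m, ‖a α‖ ^ r) ^ (1 / r) ≤
      C * (n : ℝ) ^ t * supNorm n m a

theorem hasCoeffBoundExponent_of_bohnenblustHille {m : ℕ} (hm : 0 < m) {D : ℝ} (hD : 0 < D)
    (hBH : ∀ (n : ℕ), 0 < n → ∀ a : (Fin n → ℕ) → ℂ,
      (∑ α ∈ Finset.Nat.antidiagonalTuple n m,
          ‖a α‖ ^ ((2 * m : ℝ) / (m + 1))) ^ (((m : ℝ) + 1) / (2 * m)) ≤
        D ^ m * supNorm n m a)
    {r : ℝ} (hr : 0 < r) (hrq : r ≤ 2 * m / (m + 1)) :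
    HasCoeffBoundExponent m r ((m : ℝ) / r - ((m : ℝ) + 1) / 2) := by
  set q : ℝ := 2 * m / (m + 1)
  refine ⟨D ^ m, by positivity, fun n hn a => ?_⟩
  have hBHn : (∑ α ∈ Finset.Nat.antidiagonalTuple n m, ‖a α‖ ^ q) ^ (1 / q) ≤
      D ^ m * supNorm n m a := by
    rw [one_div_div]; exact hBH n hn a
  have hcard : (#(Finset.Nat.antidiagonalTuple n m) : ℝ) ≤ (n : ℝ) ^ m := by
    rw [Finset.Nat.card_antidiagonalTuple_s10]; exact_mod_cast n.multichoose_le_pow m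
  calc (∑ α ∈ Finset.Nat.antidiagonalTuple n m, ‖a α‖ ^ r) ^ (1 / r)
      ≤ (#(Finset.Nat.antidiagonalTuple n m) : ℝ) ^ (1 / r - 1 / q) *
          (∑ α ∈ Finset.Nat.antidiagonalTuple n m, ‖a α‖ ^ q) ^ (1 / q) :=
        Real.Lp_le_card_rpow_mul_Lq_of_nonneg _ (fun _ _ => norm_nonneg _) hr hrq
    _ ≤ ((n : ℝ) ^ m) ^ (1 / r - 1 / q) * (D ^ m * supNorm n m a) := by
        gcongr
        exact sub_nonneg.2 (one_div_le_one_div_of_le hr hrq)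
    _ = D ^ m * (n : ℝ) ^ ((m : ℝ) / r - ((m : ℝ) + 1) / 2) * supNorm n m a := by
        rw [← Real.rpow_natCast, ← Real.rpow_mul (Nat.cast_nonneg n)]
        have : (m : ℝ) * (1 / r - 1 / q) = m / r - (m + 1) / 2 := by
          simp only [q]; field_simp
        rw [this]; ring

theorem le_of_hasCoeffBoundExponent_of_kahaneSalemZygmund {m : ℕ} (hm : 0 < m) {CKSZ : ℝ}
    (hKSZ : ∀ n : ℕ, m < n → ∃ ε : (Fin n → ℕ) → ℂ,
      (∀ α ∈ Finset.Nat.antidiagonalTuple n m, ε α = 1 ∨ ε α = -1) ∧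
        supNorm n m ε ≤ CKSZ * (n : ℝ) ^ (((m : ℝ) + 1) / 2) * Real.sqrt (Real.log m))
    {r t : ℝ} (hr : 0 < r) (ht : HasCoeffBoundExponent m r t) :
    (m : ℝ) / r - ((m : ℝ) + 1) / 2 ≤ t := by
  obtain ⟨C, hC, hbound⟩ := ht
  suffices (m : ℝ) / r ≤ t + ((m : ℝ) + 1) / 2 by linarith
  refine le_of_eventually_mul_rpow_le (c := ((m.factorial : ℝ) ^ (1 / r))⁻¹)
    (K := C * CKSZ * Real.sqrt (Real.log m)) (by positivity) ?_
  filter_upwards [eventually_gt_atTop m] with n hmn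
  obtain ⟨ε, hsign, hsup⟩ := hKSZ n hmn
  have hn : (0 : ℝ) < n := by exact_mod_cast hm.trans hmn
  have hcard : ((n : ℝ) ^ m / m.factorial) ^ (1 / r) ≤
      (∑ α ∈ Finset.Nat.antidiagonalTuple n m, ‖ε α‖ ^ r) ^ (1 / r) := by
    rw [sum_norm_rpow_eq_card_of_sign _ hsign, Finset.Nat.card_antidiagonalTuple_s10]
    gcongr
    exact Nat.pow_div_factorial_le_multichoose n hm
  calc ((m.factorial : ℝ) ^ (1 / r))⁻¹ * (n : ℝ) ^ ((m : ℝ) / r)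
      = ((n : ℝ) ^ m / m.factorial) ^ (1 / r) := by
        rw [Real.div_rpow (by positivity) (by positivity), ← Real.rpow_natCast,
          ← Real.rpow_mul hn.le, mul_one_div]
        ring
    _ ≤ C * (n : ℝ) ^ t * supNorm n m ε := hcard.trans (hbound n (hm.trans hmn) ε)
    _ ≤ C * (n : ℝ) ^ t * (CKSZ * (n : ℝ) ^ (((m : ℝ) + 1) / 2) * Real.sqrt (Real.log m)) := by
        gcongr
    _ = C * CKSZ * Real.sqrt (Real.log m) * (n : ℝ) ^ (t + ((m : ℝ) + 1) / 2) := by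
        rw [Real.rpow_add hn]; ring

theorem optimal_exponent_general (m : ℕ) (D : ℝ) (hD : 1 < D)
    (hBH : ∀ (n : ℕ), 0 < n → ∀ a : (Fin n → ℕ) → ℂ,
      (∑ α ∈ Finset.Nat.antidiagonalTuple n m,
          ‖a α‖ ^ ((2 * m : ℝ) / (m + 1))) ^ (((m : ℝ) + 1) / (2 * m)) ≤
        D ^ m * supNorm n m a)
    (CKSZ : ℝ)
    (hKSZ : ∀ n : ℕ, m < n → ∃ ε : (Fin n → ℕ) → ℂ,
      (∀ α ∈ Finset.Nat.antidiagonalTuple n m, ε α = 1 ∨ ε α = -1) ∧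
        supNorm n m ε ≤ CKSZ * (n : ℝ) ^ (((m : ℝ) + 1) / 2) * Real.sqrt (Real.log m)) :
    ∀ r : ℝ, 1 ≤ r → r ≤ 2 * m / (m + 1) →
      sInf {t : ℝ | ∃ C : ℝ, 0 < C ∧ ∀ (n : ℕ), 0 < n → ∀ a : (Fin n → ℕ) → ℂ,
          (∑ α ∈ Finset.Nat.antidiagonalTuple n m, ‖a α‖ ^ r) ^ (1 / r) ≤
            C * (n : ℝ) ^ t * supNorm n m a} =
        (m : ℝ) / r - ((m : ℝ) + 1) / 2 := by
  intro r hr1 hrq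
  have hr : 0 < r := one_pos.trans_le hr1
  have hm : 0 < m := Nat.pos_of_ne_zero fun hm0 => by subst hm0; norm_num at hrq; linarith
  exact IsLeast.csInf_eq
    ⟨hasCoeffBoundExponent_of_bohnenblustHille hm (zero_lt_one.trans hD) hBH hr hrq,
      fun t ht => le_of_hasCoeffBoundExponent_of_kahaneSalemZygmund hm hKSZ hr ht⟩

theorem optimal_exponent (m : ℕ) (hm : 0 < m) (D : ℝ) (hD : 1 < D)
    (hBH : ∀ (n : ℕ), 0 < n → ∀ a : (Fin n → ℕ) → ℂ,
      (∑ α ∈ Finset.Nat.antidiagonalTuple n m,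
          ‖a α‖ ^ ((2 * m : ℝ) / (m + 1))) ^ (((m : ℝ) + 1) / (2 * m)) ≤
        D ^ m * supNorm n m a)
    (CKSZ : ℝ) (hCKSZ : 0 < CKSZ)
    (hKSZ : ∀ n : ℕ, m < n → ∃ ε : (Fin n → ℕ) → ℂ,
      (∀ α ∈ Finset.Nat.antidiagonalTuple n m, ε α = 1 ∨ ε α = -1) ∧
        supNorm n m ε ≤ CKSZ * (n : ℝ) ^ (((m : ℝ) + 1) / 2) * Real.sqrt (Real.log m)) :
    ∀ r : ℝ, 1 ≤ r → r ≤ 2 * m / (m + 1) →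
      sInf {t : ℝ | ∃ C : ℝ, 0 < C ∧ ∀ (n : ℕ), 0 < n → ∀ a : (Fin n → ℕ) → ℂ,
          (∑ α ∈ Finset.Nat.antidiagonalTuple n m, ‖a α‖ ^ r) ^ (1 / r) ≤
            C * (n : ℝ) ^ t * supNorm n m a} =
        (m : ℝ) / r - ((m : ℝ) + 1) / 2 :=
  optimal_exponent_general m D hD hBH CKSZ hKSZ
end

section
/- Let m ≥ 2. Assume the multilinear/polynomial Bohnenblust–Hille inequality: there is D > 1 with ‖P‖_{2m/(m+1)} ≤ D^m ‖P‖_∞ for all m-homogeneous polynomials P on ℂ^n, all n. Then the Sidon constant S_1(m,n), defined as the smallest constant with ‖P‖_1 ≤ S_1(m,n)‖P‖_∞ for all such P, satisfies S_1(m,n) ≤ E^m · n^{(m-1)/2} for some absolute constant E > 0 independent of m, n. -/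
/-! The Sidon bound follows from the Bohnenblust–Hille inequality by Hölder's inequality with
exponents `2m/(m-1)` and `2m/(m+1)` over the `m`-homogeneous multi-indices in `n` variables:
there are at most `n ^ m` of them, and `(n ^ m) ^ ((m-1)/(2m)) = n ^ ((m-1)/2)`. -/

open Finset

theorem Sym.card_le_pow (α : Type*) [Fintype α] [DecidableEq α] (k : ℕ) :
    Fintype.card (Sym α k) ≤ Fintype.card α ^ k := by
  rw [← card_vector]
  refine Fintype.card_le_of_surjective Sym.ofVector ?_
  rintro ⟨s, hs⟩
  obtain ⟨l, rfl⟩ := Quot.exists_rep s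
  exact ⟨⟨l, hs⟩, rfl⟩

theorem Finset.Nat.card_antidiagonalTuple_le_pow (k n : ℕ) :
    #(antidiagonalTuple k n) ≤ k ^ n := by
  have e : antidiagonalTuple k n ≃ Sym (Fin k) n :=
    ((Sym.equivNatSumOfFintype (Fin k) n).trans
      (Equiv.subtypeEquivRight fun _ => Nat.mem_antidiagonalTuple.symm)).symm
  simpa [card_eq_of_equiv_fintype e] using Sym.card_le_pow (Fin k) n

theorem Finset.Nat.card_antidiagonalTuple_rpow_le_s13 {k n : ℕ} (hn : n ≠ 0) {r : ℝ} (hr : 0 ≤ r) :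
    (#(antidiagonalTuple k n) : ℝ) ^ (r / n) ≤ (k : ℝ) ^ r := by
  calc (#(antidiagonalTuple k n) : ℝ) ^ (r / n)
      ≤ ((k : ℝ) ^ n) ^ (r / n) := by
        gcongr
        exact_mod_cast card_antidiagonalTuple_le_pow k n
    _ = (k : ℝ) ^ r := by
        rw [← Real.rpow_natCast, ← Real.rpow_mul (Nat.cast_nonneg k), mul_div_cancel₀]
        exact_mod_cast hn

theorem Real.sum_le_card_rpow_mul_Lp_of_nonneg {ι : Type*} (s : Finset ι) {p : ℝ} (hp : 1 ≤ p)
    {f : ι → ℝ} (hf : ∀ i, 0 ≤ f i) :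
    ∑ i ∈ s, f i ≤ (#s : ℝ) ^ (1 - p⁻¹) * (∑ i ∈ s, f i ^ p) ^ p⁻¹ := by
  simpa using inner_le_weight_mul_Lp_of_nonneg s hp 1 f (fun _ => zero_le_one) hf

theorem sidon_constant_bound (m : ℕ) (hm : 2 ≤ m) (D : ℝ) (hD : 1 < D)
    (hBH : ∀ (n : ℕ), 0 < n → ∀ a : (Fin n → ℕ) → ℂ,
      (∑ α ∈ Finset.Nat.antidiagonalTuple n m,
          ‖a α‖ ^ ((2 * m : ℝ) / (m + 1))) ^ (((m : ℝ) + 1) / (2 * m)) ≤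
        D ^ m * supNorm n m a) :
    ∃ E : ℝ, 0 < E ∧ ∀ (n : ℕ), 0 < n → ∀ a : (Fin n → ℕ) → ℂ,
      (∑ α ∈ Finset.Nat.antidiagonalTuple n m, ‖a α‖) ≤
        E ^ m * (n : ℝ) ^ (((m : ℝ) - 1) / 2) * supNorm n m a := by
  refine ⟨D, by linarith, fun n hn a => ?_⟩
  have hm1 : (1 : ℝ) ≤ m := by exact_mod_cast one_le_two.trans hm
  set s := Finset.Nat.antidiagonalTuple n m
  set p : ℝ := 2 * m / (m + 1)
  have hp : 1 ≤ p := by rw [le_div_iff₀ (by positivity)]; linarith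
  have hp_inv : p⁻¹ = ((m : ℝ) + 1) / (2 * m) := inv_div _ _
  have hp_conj : 1 - p⁻¹ = ((m : ℝ) - 1) / 2 / m := by rw [hp_inv]; field_simp; ring
  have hcard : (#s : ℝ) ^ (1 - p⁻¹) ≤ (n : ℝ) ^ (((m : ℝ) - 1) / 2) := by
    rw [hp_conj]
    exact Finset.Nat.card_antidiagonalTuple_rpow_le_s13 (by omega) (by linarith)
  have hBHn : (∑ α ∈ s, ‖a α‖ ^ p) ^ p⁻¹ ≤ D ^ m * supNorm n m a := hp_inv ▸ hBH n hn a
  calc ∑ α ∈ s, ‖a α‖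
      ≤ (#s : ℝ) ^ (1 - p⁻¹) * (∑ α ∈ s, ‖a α‖ ^ p) ^ p⁻¹ :=
        Real.sum_le_card_rpow_mul_Lp_of_nonneg s hp fun α => norm_nonneg (a α)
    _ ≤ (n : ℝ) ^ (((m : ℝ) - 1) / 2) * (D ^ m * supNorm n m a) := by
        gcongr
    _ = D ^ m * (n : ℝ) ^ (((m : ℝ) - 1) / 2) * supNorm n m a := by ring
end
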